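/- arXiv:1905.02912 — 4 statements merged into one kernel-verified Lean document; each statement's English description precedes it below -/
import Mathlib

section
/- Exponential decay of the left singular component via a barrier function: let δ ∈ (0,1), Q₁ = (−1,−δ)×(0,T], Q̄₁ = [−1,−δ]×[0,T], and let α > 0 satisfy α ≤ α₀ δ^p (so that a(x,t) ≥ α₀δ^p ≥ α on Q̄₁). Let z : Q̄₁ → ℝ be continuous with continuous partials z_x, z_xx, z_t on Q₁, satisfying L_ε z = 0 on Q₁, z(x,0) = 0 for x ∈ [−1,−δ], and z(−δ,t) = 0 for t ∈ (0,T]. Then for all (x,t) ∈ Q̄₁: |z(x,t)| ≤ e^T · ( sup_{0 ≤ s ≤ T} |z(−1,s)| ) · exp(−α(x+1)/ε). -/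
open Set Filter Topology


lemma aux_left_deriv {f : ℝ → ℝ} {c t₀ T : ℝ} (ht₀ : 0 < t₀) (ht₀T : t₀ ≤ T)
    (hmin : ∀ s ∈ Set.Icc (0:ℝ) T, f t₀ ≤ f s)
    (hf : HasDerivWithinAt f c (Set.Ioc 0 T) t₀) : c ≤ 0 := by
  have h1 : HasDerivWithinAt f c (Set.Ioo 0 t₀) t₀ :=
    hf.mono (fun s hs => ⟨hs.1, hs.2.le.trans ht₀T⟩)
  rw [hasDerivWithinAt_iff_tendsto_slope] at h1
  have hsub : Set.Ioo (0:ℝ) t₀ \ {t₀} = Set.Ioo 0 t₀ :=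
    Set.diff_singleton_eq_self (by simp)
  rw [hsub] at h1
  haveI : (𝓝[Set.Ioo (0:ℝ) t₀] t₀).NeBot := right_nhdsWithin_Ioo_neBot ht₀
  refine le_of_tendsto h1 ?_
  filter_upwards [self_mem_nhdsWithin] with s hs
  rw [slope_def_field]
  apply div_nonpos_of_nonneg_of_nonpos
  · exact sub_nonneg.2 (hmin s ⟨hs.1.le, hs.2.le.trans ht₀T⟩)
  · linarith [hs.2]

lemma aux_second_deriv {g g' : ℝ → ℝ} {x₀ lo hi c : ℝ} (hlo : lo < x₀) (hhi : x₀ < hi)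
    (hg : ∀ x ∈ Set.Ioo lo hi, HasDerivAt g (g' x) x)
    (hg'x₀ : g' x₀ = 0)
    (hg'' : HasDerivAt g' c x₀)
    (hmin : ∀ x ∈ Set.Ioo lo hi, g x₀ ≤ g x) : 0 ≤ c := by
  by_contra hcon
  push_neg at hcon
  rw [hasDerivAt_iff_tendsto_slope] at hg''
  have hev : {x | slope g' x₀ x < 0} ∈ 𝓝[≠] x₀ := hg'' (Iio_mem_nhds hcon)
  have hev2 : {x | slope g' x₀ x < 0} ∈ 𝓝[>] x₀ :=
    nhdsWithin_mono x₀ (fun x hx => ne_of_gt hx) hev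
  rw [mem_nhdsGT_iff_exists_Ioo_subset] at hev2
  obtain ⟨u, hu, hsub⟩ := hev2
  have hu' : x₀ < u := hu
  set m := (x₀ + min u hi) / 2 with hm
  have hmin_uh : x₀ < min u hi := lt_min hu' hhi
  have hm1 : x₀ < m := by simp only [hm]; linarith
  have hm2 : m < min u hi := by simp only [hm]; linarith
  have hmu : m < u := hm2.trans_le (min_le_left _ _)
  have hmhi : m < hi := hm2.trans_le (min_le_right _ _)
  -- g' < 0 on Ioo x₀ m
  have hneg : ∀ x ∈ Set.Ioo x₀ m, g' x < 0 := by
    intro x hx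
    have hx' : x ∈ Set.Ioo x₀ u := ⟨hx.1, hx.2.trans hmu⟩
    have hs := hsub hx'
    simp only [Set.mem_setOf_eq, slope_def_field, hg'x₀, sub_zero] at hs
    have hxpos : 0 < x - x₀ := by linarith [hx.1]
    by_contra hge
    push_neg at hge
    exact absurd hs (not_lt.2 (div_nonneg hge hxpos.le))
  have hIccsub : Set.Icc x₀ m ⊆ Set.Ioo lo hi := fun x hx =>
    ⟨hlo.trans_le hx.1, lt_of_le_of_lt hx.2 hmhi⟩
  have hcont : ContinuousOn g (Set.Icc x₀ m) := fun x hx =>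
    ((hg x (hIccsub hx)).continuousAt).continuousWithinAt
  have hanti : StrictAntiOn g (Set.Icc x₀ m) := by
    apply strictAntiOn_of_deriv_neg (convex_Icc x₀ m) hcont
    intro x hx
    rw [interior_Icc] at hx
    rw [(hg x (hIccsub ⟨hx.1.le, hx.2.le⟩)).deriv]
    exact hneg x hx
  have h1 : g m < g x₀ :=
    hanti (Set.left_mem_Icc.2 hm1.le) (Set.right_mem_Icc.2 hm1.le) hm1
  have h2 : g x₀ ≤ g m := hmin m ⟨hlo.trans hm1, hmhi⟩
  linarith

lemma aux_minprin (T ε β xl xr : ℝ) (a b d w wx wxx wt : ℝ → ℝ → ℝ)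
    (hε : 0 < ε) (hβ : 0 < β) (hx : xl < xr) (hT : 0 < T)
    (hb : ∀ X ∈ Set.Icc xl xr, ∀ t ∈ Set.Icc (0:ℝ) T, β ≤ b X t)
    (hd : ∀ X ∈ Set.Icc xl xr, ∀ t ∈ Set.Icc (0:ℝ) T, 0 ≤ d X t)
    (hwcont : ContinuousOn (fun q : ℝ × ℝ => w q.1 q.2) (Set.Icc xl xr ×ˢ Set.Icc 0 T))
    (hwx : ∀ X ∈ Set.Ioo xl xr, ∀ t ∈ Set.Ioc (0:ℝ) T,
      HasDerivAt (fun y => w y t) (wx X t) X)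
    (hwxx : ∀ X ∈ Set.Ioo xl xr, ∀ t ∈ Set.Ioc (0:ℝ) T,
      HasDerivAt (fun y => wx y t) (wxx X t) X)
    (hwt : ∀ X ∈ Set.Ioo xl xr, ∀ t ∈ Set.Ioc (0:ℝ) T,
      HasDerivWithinAt (fun s => w X s) (wt X t) (Set.Ioc 0 T) t)
    (hL : ∀ X ∈ Set.Ioo xl xr, ∀ t ∈ Set.Ioc (0:ℝ) T,
      ε * wxx X t + a X t * wx X t - d X t * wt X t - b X t * w X t ≤ 0)
    (hbl : ∀ t ∈ Set.Icc (0:ℝ) T, 0 ≤ w xl t)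
    (hbr : ∀ t ∈ Set.Icc (0:ℝ) T, 0 ≤ w xr t)
    (hb0 : ∀ X ∈ Set.Icc xl xr, 0 ≤ w X 0) :
    ∀ X ∈ Set.Icc xl xr, ∀ t ∈ Set.Icc (0:ℝ) T, 0 ≤ w X t := by
  have hK : IsCompact (Set.Icc xl xr ×ˢ Set.Icc (0:ℝ) T) :=
    isCompact_Icc.prod isCompact_Icc
  have hKne : (Set.Icc xl xr ×ˢ Set.Icc (0:ℝ) T).Nonempty :=
    ⟨(xl, 0), ⟨Set.left_mem_Icc.2 hx.le, Set.left_mem_Icc.2 hT.le⟩⟩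
  obtain ⟨q₀, hq₀K, hq₀min⟩ := hK.exists_isMinOn hKne hwcont
  set x₀ := q₀.1 with hx₀def
  set t₀ := q₀.2 with ht₀def
  have hx₀ : x₀ ∈ Set.Icc xl xr := hq₀K.1
  have ht₀ : t₀ ∈ Set.Icc (0:ℝ) T := hq₀K.2
  have hmin : ∀ X ∈ Set.Icc xl xr, ∀ t ∈ Set.Icc (0:ℝ) T, w x₀ t₀ ≤ w X t := by
    intro X hX t ht
    exact hq₀min (Set.mk_mem_prod hX ht)
  by_contra hcon
  push_neg at hcon
  obtain ⟨X', hX', t', ht', hneg⟩ := hcon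
  have hm : w x₀ t₀ < 0 := lt_of_le_of_lt (hmin X' hX' t' ht') hneg
  -- q₀ is not on the parabolic boundary
  have hx₀l : xl < x₀ := by
    rcases eq_or_lt_of_le hx₀.1 with h | h
    · exact absurd hm (not_lt.2 (h ▸ hbl t₀ ht₀))
    · exact h
  have hx₀r : x₀ < xr := by
    rcases eq_or_lt_of_le hx₀.2 with h | h
    · exact absurd hm (not_lt.2 (h ▸ hbr t₀ ht₀))
    · exact h
  have ht₀0 : 0 < t₀ := by
    rcases eq_or_lt_of_le ht₀.1 with h | h
    · exact absurd hm (not_lt.2 (h ▸ hb0 x₀ hx₀))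
    · exact h
  have hx₀Ioo : x₀ ∈ Set.Ioo xl xr := ⟨hx₀l, hx₀r⟩
  have ht₀Ioc : t₀ ∈ Set.Ioc (0:ℝ) T := ⟨ht₀0, ht₀.2⟩
  -- first derivative in x vanishes
  have hloc : IsLocalMin (fun y => w y t₀) x₀ := by
    filter_upwards [Ioo_mem_nhds hx₀l hx₀r] with y hy
    exact hmin y ⟨hy.1.le, hy.2.le⟩ t₀ ht₀
  have hwx0 : wx x₀ t₀ = 0 := hloc.hasDerivAt_eq_zero (hwx x₀ hx₀Ioo t₀ ht₀Ioc)
  -- second derivative in x nonneg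
  have hwxx0 : 0 ≤ wxx x₀ t₀ :=
    aux_second_deriv hx₀l hx₀r (fun x hxx => hwx x hxx t₀ ht₀Ioc) hwx0
      (hwxx x₀ hx₀Ioo t₀ ht₀Ioc)
      (fun x hxx => hmin x ⟨hxx.1.le, hxx.2.le⟩ t₀ ht₀)
  -- time derivative nonpos
  have hwt0 : wt x₀ t₀ ≤ 0 :=
    aux_left_deriv ht₀0 ht₀.2 (fun s hs => hmin x₀ hx₀ s hs)
      (hwt x₀ hx₀Ioo t₀ ht₀Ioc)
  have hLq := hL x₀ hx₀Ioo t₀ ht₀Ioc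
  have hbq := hb x₀ hx₀ t₀ ht₀
  have hdq := hd x₀ hx₀ t₀ ht₀
  rw [hwx0, mul_zero] at hLq
  linarith [mul_nonneg hε.le hwxx0, mul_nonpos_of_nonneg_of_nonpos hdq hwt0,
    mul_neg_of_pos_of_neg (hβ.trans_le hbq) hm]

/-- Exponential decay of the left singular component via a barrier function:
`|z(x,t)| ≤ e^T · sup_{0≤s≤T} |z(-1,s)| · exp(-α(x+1)/ε)` on `Q̄₁ = [-1,-δ] × [0,T]`. -/
theorem stmt_5
    (T ε α α₀ β γ δ : ℝ) (p : ℕ)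
    (a b d a₀ z zx zxx zt : ℝ → ℝ → ℝ)
    (hT : 0 < T) (hε : ε ∈ Set.Ioc (0:ℝ) 1)
    (hp1 : 1 ≤ p) (hpodd : Odd p)
    (hacont : ContinuousOn (fun q : ℝ × ℝ => a q.1 q.2) (Set.Icc (-1:ℝ) 1 ×ˢ Set.Icc 0 T))
    (hbcont : ContinuousOn (fun q : ℝ × ℝ => b q.1 q.2) (Set.Icc (-1:ℝ) 1 ×ˢ Set.Icc 0 T))
    (hdcont : ContinuousOn (fun q : ℝ × ℝ => d q.1 q.2) (Set.Icc (-1:ℝ) 1 ×ˢ Set.Icc 0 T))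
    (haform : ∀ X ∈ Set.Icc (-1:ℝ) 1, ∀ t ∈ Set.Icc (0:ℝ) T, a X t = -(a₀ X t) * X ^ p)
    (hα₀ : 0 < α₀)
    (ha₀ : ∀ X ∈ Set.Icc (-1:ℝ) 1, ∀ t ∈ Set.Icc (0:ℝ) T, α₀ ≤ a₀ X t)
    (hβ : 0 < β)
    (hb : ∀ X ∈ Set.Icc (-1:ℝ) 1, ∀ t ∈ Set.Icc (0:ℝ) T, β ≤ b X t)
    (hγ : 0 ≤ γ)
    (hd : ∀ X ∈ Set.Icc (-1:ℝ) 1, ∀ t ∈ Set.Icc (0:ℝ) T, γ ≤ d X t)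
    -- δ and α
    (hδ : δ ∈ Set.Ioo (0:ℝ) 1) (hα : 0 < α) (hαδ : α ≤ α₀ * δ ^ p)
    -- regularity of z on Q̄₁ = [-1,-δ] × [0,T] and Q₁ = (-1,-δ) × (0,T]
    (hzcont : ContinuousOn (fun q : ℝ × ℝ => z q.1 q.2) (Set.Icc (-1:ℝ) (-δ) ×ˢ Set.Icc 0 T))
    (hzx : ∀ X ∈ Set.Ioo (-1:ℝ) (-δ), ∀ t ∈ Set.Ioc (0:ℝ) T,
      HasDerivAt (fun y => z y t) (zx X t) X)
    (hzxx : ∀ X ∈ Set.Ioo (-1:ℝ) (-δ), ∀ t ∈ Set.Ioc (0:ℝ) T,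
      HasDerivAt (fun y => zx y t) (zxx X t) X)
    (hzt : ∀ X ∈ Set.Ioo (-1:ℝ) (-δ), ∀ t ∈ Set.Ioc (0:ℝ) T,
      HasDerivWithinAt (fun s => z X s) (zt X t) (Set.Ioc 0 T) t)
    (hzxcont : ContinuousOn (fun q : ℝ × ℝ => zx q.1 q.2)
      (Set.Ioo (-1:ℝ) (-δ) ×ˢ Set.Ioc 0 T))
    (hzxxcont : ContinuousOn (fun q : ℝ × ℝ => zxx q.1 q.2)
      (Set.Ioo (-1:ℝ) (-δ) ×ˢ Set.Ioc 0 T))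
    (hztcont : ContinuousOn (fun q : ℝ × ℝ => zt q.1 q.2)
      (Set.Ioo (-1:ℝ) (-δ) ×ˢ Set.Ioc 0 T))
    -- L_ε z = 0 on Q₁
    (hLz : ∀ X ∈ Set.Ioo (-1:ℝ) (-δ), ∀ t ∈ Set.Ioc (0:ℝ) T,
      ε * zxx X t + a X t * zx X t - d X t * zt X t - b X t * z X t = 0)
    -- z = 0 on the bottom and on the right lateral boundary of Q̄₁
    (hz0 : ∀ X ∈ Set.Icc (-1:ℝ) (-δ), z X 0 = 0)
    (hzδ : ∀ t ∈ Set.Ioc (0:ℝ) T, z (-δ) t = 0) :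
    ∀ X ∈ Set.Icc (-1:ℝ) (-δ), ∀ t ∈ Set.Icc (0:ℝ) T,
      |z X t| ≤ Real.exp T * sSup ((fun s => |z (-1) s|) '' Set.Icc (0:ℝ) T) *
        Real.exp (-(α * (X + 1)) / ε) := by
  obtain ⟨hε0, hε1⟩ := hε
  obtain ⟨hδ0, hδ1⟩ := hδ
  have hεne : ε ≠ 0 := hε0.ne'
  have hδlt : (-1:ℝ) < -δ := by linarith
  set M := sSup ((fun s => |z (-1) s|) '' Set.Icc (0:ℝ) T) with hMdef
  have hm1 : (-1:ℝ) ∈ Set.Icc (-1:ℝ) (-δ) := ⟨le_refl _, by linarith⟩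
  have hzcont1 : ContinuousOn (fun s => |z (-1) s|) (Set.Icc (0:ℝ) T) := by
    have hc : ContinuousOn (fun s : ℝ => ((-1:ℝ), s)) (Set.Icc (0:ℝ) T) :=
      (continuous_const.prodMk continuous_id).continuousOn
    exact (hzcont.comp hc (fun s hs => Set.mk_mem_prod hm1 hs)).abs
  have hbdd : BddAbove ((fun s => |z (-1) s|) '' Set.Icc (0:ℝ) T) :=
    (isCompact_Icc.image_of_continuousOn hzcont1).bddAbove
  have hMle : ∀ s ∈ Set.Icc (0:ℝ) T, |z (-1) s| ≤ M := fun s hs =>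
    le_csSup hbdd ⟨s, hs, rfl⟩
  have hM0 : 0 ≤ M := le_trans (abs_nonneg _) (hMle 0 ⟨le_refl _, hT.le⟩)
  set E : ℝ → ℝ := fun X => Real.exp (-(α * (X + 1)) / ε) with hEdef
  have hEpos : ∀ X, 0 < E X := fun X => Real.exp_pos _
  have hEderiv : ∀ X : ℝ, HasDerivAt E (E X * (-α / ε)) X := by
    intro X
    have h0 : HasDerivAt (fun y : ℝ => y + 1) 1 X := (hasDerivAt_id X).add_const 1
    have h1 : HasDerivAt (fun y : ℝ => -(α * (y + 1)) / ε) (-α / ε) X := by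
      simpa [neg_div] using ((h0.const_mul α).neg).div_const ε
    simpa [hEdef] using h1.exp
  have hE1 : E (-1) = 1 := by simp [hEdef]
  -- lower bound for the convection coefficient on the strip
  have haα : ∀ X ∈ Set.Icc (-1:ℝ) (-δ), ∀ t ∈ Set.Icc (0:ℝ) T, α ≤ a X t := by
    intro X hX t ht
    have hX1 : X ∈ Set.Icc (-1:ℝ) 1 := ⟨hX.1, by linarith [hX.2]⟩
    rw [haform X hX1 t ht]
    have hXp : X ^ p ≤ -δ ^ p := by
      have h := hpodd.strictMono_pow (R := ℝ) |>.monotone hX.2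
      rwa [hpodd.neg_pow] at h
    have hδp : 0 < δ ^ p := pow_pos hδ0 p
    have ha₀X : α₀ ≤ a₀ X t := ha₀ X hX1 t ht
    calc α ≤ α₀ * δ ^ p := hαδ
      _ ≤ a₀ X t * (-X ^ p) :=
        mul_le_mul ha₀X (by linarith) hδp.le (hα₀.le.trans ha₀X)
      _ = -(a₀ X t) * X ^ p := by ring
  -- the key barrier estimate, for both signs
  have key : ∀ σ : ℝ, |σ| = 1 → ∀ X ∈ Set.Icc (-1:ℝ) (-δ), ∀ t ∈ Set.Icc (0:ℝ) T,
      0 ≤ M * Real.exp t * E X - σ * z X t := by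
    intro σ hσ
    have hsub : Set.Icc (-1:ℝ) (-δ) ⊆ Set.Icc (-1:ℝ) 1 :=
      Set.Icc_subset_Icc (le_refl _) (by linarith)
    apply aux_minprin T ε β (-1) (-δ) a b d
      (fun X t => M * Real.exp t * E X - σ * z X t)
      (fun X t => M * Real.exp t * (E X * (-α / ε)) - σ * zx X t)
      (fun X t => M * Real.exp t * (E X * (-α / ε) * (-α / ε)) - σ * zxx X t)
      (fun X t => M * Real.exp t * E X - σ * zt X t)
      hε0 hβ hδlt hT
    · intro X hX t ht; exact hb X (hsub hX) t ht
    · intro X hX t ht; exact hγ.trans (hd X (hsub hX) t ht)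
    · apply ContinuousOn.sub
      · exact ((continuous_const.mul (Real.continuous_exp.comp continuous_snd)).mul
          ((Real.continuous_exp.comp
            (((continuous_const.mul (continuous_fst.add continuous_const)).neg).div_const ε)))).continuousOn
      · exact continuousOn_const.mul hzcont
    · intro X hX t ht
      exact ((hEderiv X).const_mul (M * Real.exp t)).sub ((hzx X hX t ht).const_mul σ)
    · intro X hX t ht
      exact (((hEderiv X).mul_const (-α / ε)).const_mul (M * Real.exp t)).sub
        ((hzxx X hX t ht).const_mul σ)
    · intro X hX t ht
      exact ((((Real.hasDerivAt_exp t).const_mul M).mul_const (E X)).hasDerivWithinAt).sub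
        ((hzt X hX t ht).const_mul σ)
    · intro X hX t ht
      have hX' : X ∈ Set.Icc (-1:ℝ) (-δ) := ⟨hX.1.le, hX.2.le⟩
      have ht' : t ∈ Set.Icc (0:ℝ) T := ⟨ht.1.le, ht.2⟩
      have hLzq := hLz X hX t ht
      have haq := haα X hX' t ht'
      have hαε : 0 < α / ε := div_pos hα hε0
      have hΦ : 0 ≤ M * Real.exp t * E X :=
        mul_nonneg (mul_nonneg hM0 (Real.exp_pos t).le) (hEpos X).le
      have expand : ε * (M * Real.exp t * (E X * (-α / ε) * (-α / ε)) - σ * zxx X t)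
          + a X t * (M * Real.exp t * (E X * (-α / ε)) - σ * zx X t)
          - d X t * (M * Real.exp t * E X - σ * zt X t)
          - b X t * (M * Real.exp t * E X - σ * z X t)
          = M * Real.exp t * E X *
              (α * (α / ε) - a X t * (α / ε) - d X t - b X t)
            - σ * (ε * zxx X t + a X t * zx X t - d X t * zt X t - b X t * z X t) := by
        field_simp
        ring
      rw [expand, hLzq, mul_zero, sub_zero]
      apply mul_nonpos_of_nonneg_of_nonpos hΦ
      have e2 : α * (α / ε) ≤ a X t * (α / ε) := mul_le_mul_of_nonneg_right haq hαε.le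
      have hdq : (0:ℝ) ≤ d X t := hγ.trans (hd X (hsub hX') t ht')
      have hbq : (0:ℝ) ≤ b X t := hβ.le.trans (hb X (hsub hX') t ht')
      linarith
    · intro t ht
      rw [hE1, mul_one]
      have h1 : σ * z (-1) t ≤ |z (-1) t| := by
        calc σ * z (-1) t ≤ |σ * z (-1) t| := le_abs_self _
          _ = |z (-1) t| := by rw [abs_mul, hσ, one_mul]
      have h2 : M ≤ M * Real.exp t :=
        le_mul_of_one_le_right hM0 (Real.one_le_exp ht.1)
      linarith [hMle t ht]
    · intro t ht
      rcases eq_or_lt_of_le ht.1 with h | h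
      · rw [← h, hz0 (-δ) ⟨hδlt.le, le_refl _⟩, mul_zero, sub_zero]
        exact mul_nonneg (mul_nonneg hM0 (Real.exp_pos _).le) (hEpos _).le
      · rw [hzδ t ⟨h, ht.2⟩, mul_zero, sub_zero]
        exact mul_nonneg (mul_nonneg hM0 (Real.exp_pos _).le) (hEpos _).le
    · intro X hX
      rw [hz0 X hX, mul_zero, sub_zero]
      exact mul_nonneg (mul_nonneg hM0 (Real.exp_pos _).le) (hEpos _).le
  -- conclude
  intro X hX t ht
  have h1 := key 1 (by norm_num) X hX t ht
  have h2 := key (-1) (by norm_num) X hX t ht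
  have hmono : M * Real.exp t * E X ≤ Real.exp T * M * E X := by
    have hle : Real.exp t ≤ Real.exp T := Real.exp_le_exp.2 ht.2
    have := mul_le_mul_of_nonneg_right (mul_le_mul_of_nonneg_left hle hM0) (hEpos X).le
    calc M * Real.exp t * E X ≤ M * Real.exp T * E X := this
      _ = Real.exp T * M * E X := by ring
  show |z X t| ≤ Real.exp T * M * E X
  rw [abs_le]
  constructor
  · nlinarith
  · nlinarith
end

section
/- M-matrix property of the hybrid scheme (Lemma 3.1): suppose Assumption (3.7) holds and N ≥ N₀. Then for every time level n ≥ 1: (i) for each i ∈ I (1 ≤ i ≤ N−1), the central-scheme coefficients satisfy r⁻_{cen,i} = 2εΔt/(ĥ_i h_i) − a_i^n Δt/ĥ_i > 0, r⁺_{cen,i} = 2εΔt/(ĥ_i h_{i+1}) + a_i^n Δt/ĥ_i > 0, and |r⁺_{cen,i}| + |r⁻_{cen,i}| < |r⁰_{cen,i}| where r⁰_{cen,i} = −(2εΔt/ĥ_i)(1/h_i + 1/h_{i+1}) − b_i^n Δt − d_i^n; (ii) for each i ∉ I with 1 ≤ i ≤ N/2, the midpoint-upwind coefficients satisfy r⁺_{mu,i,+}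 = 2εΔt/(ĥ_i h_{i+1}) + a_{i+1/2}^n Δt/h_{i+1} − d_{i+1/2}^n/2 − Δt b_{i+1/2}^n/2 > 0, r⁻_{mu,i,+} = 2εΔt/(ĥ_i h_i) > 0, and |r⁺_{mu,i,+}| + |r⁻_{mu,i,+}| < |r⁰_{mu,i,+}|; and symmetrically for each i ∉ I with N/2 < i ≤ N−1, r⁻_{mu,i,−} > 0, r⁺_{mu,i,−} = 2εΔt/(ĥ_i h_{i+1}) > 0 and |r⁺_{mu,i,−}| + |r⁻_{mu,i,−}| < |r⁰_{mu,i,−}|. Consequently the tridiagonal matrix of the discrete scheme at each time level is an M-matrix. -/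
open Set

noncomputable section

/-- `sup`-norm of `|g|` over `Q̄ = [-1,1] × [0,T]`. -/
def supAbs (T : ℝ) (g : ℝ → ℝ → ℝ) : ℝ :=
  sSup ((fun q : ℝ × ℝ => |g q.1 q.2|) '' (Set.Icc (-1:ℝ) 1 ×ˢ Set.Icc (0:ℝ) T))

/-- spatial step `h_i = x_i - x_{i-1}`. -/
def hs (x : ℕ → ℝ) (i : ℕ) : ℝ := x i - x (i - 1)

/-- `ĥ_i = h_i + h_{i+1} = x_{i+1} - x_{i-1}`. -/
def hhat (x : ℕ → ℝ) (i : ℕ) : ℝ := x (i + 1) - x (i - 1)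

/-- central scheme coefficient `r⁻_{cen,i}`. -/
def rCenM (ε Δt : ℝ) (a : ℝ → ℝ → ℝ) (x : ℕ → ℝ) (tn : ℕ → ℝ) (i n : ℕ) : ℝ :=
  2 * ε * Δt / (hhat x i * hs x i) - a (x i) (tn n) * Δt / hhat x i

/-- central scheme coefficient `r⁺_{cen,i}`. -/
def rCenP (ε Δt : ℝ) (a : ℝ → ℝ → ℝ) (x : ℕ → ℝ) (tn : ℕ → ℝ) (i n : ℕ) : ℝ :=
  2 * ε * Δt / (hhat x i * hs x (i + 1)) + a (x i) (tn n) * Δt / hhat x i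

/-- central scheme coefficient `r⁰_{cen,i}`. -/
def rCen0 (ε Δt : ℝ) (b d : ℝ → ℝ → ℝ) (x : ℕ → ℝ) (tn : ℕ → ℝ) (i n : ℕ) : ℝ :=
  -(2 * ε * Δt / hhat x i) * (1 / hs x i + 1 / hs x (i + 1))
    - b (x i) (tn n) * Δt - d (x i) (tn n)

/-- half-mesh average `g_{i+1/2}^n`. -/
def avgP (g : ℝ → ℝ → ℝ) (x : ℕ → ℝ) (tn : ℕ → ℝ) (i n : ℕ) : ℝ :=
  (g (x (i + 1)) (tn n) + g (x i) (tn n)) / 2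

/-- half-mesh average `g_{i-1/2}^n`. -/
def avgM (g : ℝ → ℝ → ℝ) (x : ℕ → ℝ) (tn : ℕ → ℝ) (i n : ℕ) : ℝ :=
  (g (x (i - 1)) (tn n) + g (x i) (tn n)) / 2

/-- midpoint upwind (`+`) coefficient `r⁺_{mu,i,+}`. -/
def rMuPP (ε Δt : ℝ) (a b d : ℝ → ℝ → ℝ) (x : ℕ → ℝ) (tn : ℕ → ℝ) (i n : ℕ) : ℝ :=
  2 * ε * Δt / (hhat x i * hs x (i + 1)) + avgP a x tn i n * Δt / hs x (i + 1)
    - avgP d x tn i n / 2 - Δt * avgP b x tn i n / 2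

/-- midpoint upwind (`+`) coefficient `r⁻_{mu,i,+}`. -/
def rMuPM (ε Δt : ℝ) (x : ℕ → ℝ) (i : ℕ) : ℝ :=
  2 * ε * Δt / (hhat x i * hs x i)

/-- midpoint upwind (`+`) coefficient `r⁰_{mu,i,+}`. -/
def rMuP0 (ε Δt : ℝ) (a b d : ℝ → ℝ → ℝ) (x : ℕ → ℝ) (tn : ℕ → ℝ) (i n : ℕ) : ℝ :=
  -(2 * ε * Δt / hhat x i) * (1 / hs x i + 1 / hs x (i + 1))
    - avgP a x tn i n * Δt / hs x (i + 1) - avgP d x tn i n / 2 - Δt * avgP b x tn i n / 2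

/-- midpoint upwind (`-`) coefficient `r⁻_{mu,i,-}`. -/
def rMuMM (ε Δt : ℝ) (a b d : ℝ → ℝ → ℝ) (x : ℕ → ℝ) (tn : ℕ → ℝ) (i n : ℕ) : ℝ :=
  2 * ε * Δt / (hhat x i * hs x i) - avgM a x tn i n * Δt / hs x i
    - avgM d x tn i n / 2 - avgM b x tn i n * Δt / 2

/-- midpoint upwind (`-`) coefficient `r⁺_{mu,i,-}`. -/
def rMuMP (ε Δt : ℝ) (x : ℕ → ℝ) (i : ℕ) : ℝ :=
  2 * ε * Δt / (hhat x i * hs x (i + 1))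

/-- midpoint upwind (`-`) coefficient `r⁰_{mu,i,-}`. -/
def rMuM0 (ε Δt : ℝ) (a b d : ℝ → ℝ → ℝ) (x : ℕ → ℝ) (tn : ℕ → ℝ) (i n : ℕ) : ℝ :=
  -(2 * ε * Δt / hhat x i) * (1 / hs x (i + 1) + 1 / hs x i)
    + avgM a x tn i n * Δt / hs x i - avgM d x tn i n / 2 - avgM b x tn i n * Δt / 2

private lemma cen_eM (ε Δt HH S1 A : ℝ) (hH : HH ≠ 0) (h1 : S1 ≠ 0) :
    2 * ε * Δt / (HH * S1) - A * Δt / HH = Δt * (2*ε - A * S1) / (HH * S1) := by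
  field_simp

private lemma cen_eP (ε Δt HH S2 A : ℝ) (hH : HH ≠ 0) (h2 : S2 ≠ 0) :
    2 * ε * Δt / (HH * S2) + A * Δt / HH = Δt * (2*ε + A * S2) / (HH * S2) := by
  field_simp

private lemma cen_id (ε Δt HH S1 S2 A B D : ℝ) (hH : HH ≠ 0) (h1 : S1 ≠ 0) (h2 : S2 ≠ 0) :
    (2 * ε * Δt / (HH * S2) + A * Δt / HH) + (2 * ε * Δt / (HH * S1) - A * Δt / HH)
      + B * Δt + D
      = -(-(2 * ε * Δt / HH) * (1 / S1 + 1 / S2) - B * Δt - D) := by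
  field_simp
  ring

private lemma muP_id (ε Δt HH S1 S2 A B D : ℝ) (hH : HH ≠ 0) (h1 : S1 ≠ 0) (h2 : S2 ≠ 0) :
    (2 * ε * Δt / (HH * S2) + A * Δt / S2 - D / 2 - Δt * B / 2)
      + 2 * ε * Δt / (HH * S1) + D + Δt * B
      = -(-(2 * ε * Δt / HH) * (1 / S1 + 1 / S2) - A * Δt / S2 - D / 2 - Δt * B / 2) := by
  field_simp
  ring

private lemma muM_id (ε Δt HH S1 S2 A B D : ℝ) (hH : HH ≠ 0) (h1 : S1 ≠ 0) (h2 : S2 ≠ 0) :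
    2 * ε * Δt / (HH * S2)
      + (2 * ε * Δt / (HH * S1) - A * Δt / S1 - D / 2 - B * Δt / 2)
      + D + B * Δt
      = -(-(2 * ε * Δt / HH) * (1 / S2 + 1 / S1) + A * Δt / S1 - D / 2 - B * Δt / 2) := by
  field_simp
  ring

set_option maxHeartbeats 1000000 in
/-- Lemma 3.1: under Assumption (3.7) the tridiagonal matrix of the hybrid scheme
has positive off-diagonal coefficients which are strictly dominated by the diagonal
at every time level (hence it is an M-matrix). -/
theorem stmt_6
    (T ε Δt α α₀ β γ τ₀ L τ h H κ : ℝ) (p N M N₀ : ℕ)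
    (a b d a₀ : ℝ → ℝ → ℝ) (x : ℕ → ℝ) (tn : ℕ → ℝ)
    (hT : 0 < T) (hε : ε ∈ Set.Ioc (0:ℝ) 1)
    (hM : 0 < M) (hΔt : Δt = T / M) (htn : ∀ n : ℕ, tn n = n * Δt)
    (hN4 : 4 ∣ N)
    (hp1 : 1 ≤ p) (hpodd : Odd p)
    (hacont : ContinuousOn (fun q : ℝ × ℝ => a q.1 q.2) (Set.Icc (-1:ℝ) 1 ×ˢ Set.Icc 0 T))
    (hbcont : ContinuousOn (fun q : ℝ × ℝ => b q.1 q.2) (Set.Icc (-1:ℝ) 1 ×ˢ Set.Icc 0 T))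
    (hdcont : ContinuousOn (fun q : ℝ × ℝ => d q.1 q.2) (Set.Icc (-1:ℝ) 1 ×ˢ Set.Icc 0 T))
    (haform : ∀ X ∈ Set.Icc (-1:ℝ) 1, ∀ t ∈ Set.Icc (0:ℝ) T, a X t = -(a₀ X t) * X ^ p)
    (hα₀ : 0 < α₀)
    (ha₀ : ∀ X ∈ Set.Icc (-1:ℝ) 1, ∀ t ∈ Set.Icc (0:ℝ) T, α₀ ≤ a₀ X t)
    (hβ : 0 < β)
    (hb : ∀ X ∈ Set.Icc (-1:ℝ) 1, ∀ t ∈ Set.Icc (0:ℝ) T, β ≤ b X t)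
    (hγ : 0 ≤ γ)
    (hd : ∀ X ∈ Set.Icc (-1:ℝ) 1, ∀ t ∈ Set.Icc (0:ℝ) T, γ ≤ d X t)
    -- Shishkin mesh
    (hα : α ∈ Set.Ioo (0:ℝ) α₀) (hτ₀ : 1 / α ≤ τ₀)
    (hL : 0 < L) (hLe : Real.exp (-L) ≤ L / N) (hLlog : L ≤ Real.log N)
    (hτ : τ = min (1/4 : ℝ) (τ₀ * ε * L))
    (hh : h = 4 * τ / N) (hH : H = 4 * (1 - τ) / N)
    (hx1 : ∀ i : ℕ, i ≤ N / 4 → x i = -1 + i * h)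
    (hx2 : ∀ i : ℕ, N / 4 ≤ i → i ≤ 3 * (N / 4) →
      x i = -1 + τ + ((i : ℝ) - (N : ℝ) / 4) * H)
    (hx3 : ∀ i : ℕ, 3 * (N / 4) ≤ i → i ≤ N → x i = 1 - ((N : ℝ) - (i : ℝ)) * h)
    -- Assumption (3.7)
    (hκ : 0 < κ)
    (hκP : ∀ i n : ℕ, 1 ≤ i → i ≤ N / 2 → 1 ≤ n → n ≤ M →
      ¬ |a (x i) (tn n) * hs x i| < 2 * ε → κ ≤ avgP a x tn i n)
    (hκM : ∀ i n : ℕ, N / 2 < i → i ≤ N - 1 → 1 ≤ n → n ≤ M →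
      ¬ |a (x i) (tn n) * hs x i| < 2 * ε → κ ≤ -avgM a x tn i n)
    (h37a : 2 * (supAbs T d / Δt + supAbs T b) ≤ (N₀ : ℝ) * κ)
    (h37b : 2 * τ₀ * supAbs T a < (N₀ : ℝ) / Real.log N₀)
    (hNN₀ : N₀ ≤ N) :
    ∀ n : ℕ, 1 ≤ n → n ≤ M → ∀ i : ℕ, 1 ≤ i → i ≤ N - 1 →
      ((|a (x i) (tn n) * hs x i| < 2 * ε →
          0 < rCenM ε Δt a x tn i n ∧ 0 < rCenP ε Δt a x tn i n ∧
          |rCenP ε Δt a x tn i n| + |rCenM ε Δt a x tn i n| <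
            |rCen0 ε Δt b d x tn i n|) ∧
       (¬ |a (x i) (tn n) * hs x i| < 2 * ε → i ≤ N / 2 →
          0 < rMuPP ε Δt a b d x tn i n ∧ 0 < rMuPM ε Δt x i ∧
          |rMuPP ε Δt a b d x tn i n| + |rMuPM ε Δt x i| <
            |rMuP0 ε Δt a b d x tn i n|) ∧
       (¬ |a (x i) (tn n) * hs x i| < 2 * ε → N / 2 < i →
          0 < rMuMM ε Δt a b d x tn i n ∧ 0 < rMuMP ε Δt x i ∧
          |rMuMP ε Δt x i| + |rMuMM ε Δt a b d x tn i n| <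
            |rMuM0 ε Δt a b d x tn i n|)) := by
  obtain ⟨hε0, hε1⟩ := hε
  obtain ⟨q, hq⟩ := hN4
  have hM0 : (0:ℝ) < (M:ℝ) := by exact_mod_cast hM
  have hΔt0 : (0:ℝ) < Δt := by rw [hΔt]; positivity
  have hα0 : 0 < α := hα.1
  have hτ₀0 : 0 < τ₀ := lt_of_lt_of_le (by positivity) hτ₀
  have hτ0 : 0 < τ := by
    rw [hτ]; exact lt_min (by norm_num) (by positivity)
  have hτ14 : τ ≤ 1/4 := by rw [hτ]; exact min_le_left _ _
  have hcomp : IsCompact (Set.Icc (-1:ℝ) 1 ×ˢ Set.Icc (0:ℝ) T) :=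
    isCompact_Icc.prod isCompact_Icc
  have hval : ∀ g : ℝ → ℝ → ℝ,
      ContinuousOn (fun p : ℝ × ℝ => g p.1 p.2) (Set.Icc (-1:ℝ) 1 ×ˢ Set.Icc (0:ℝ) T) →
      ∀ X ∈ Set.Icc (-1:ℝ) 1, ∀ t ∈ Set.Icc (0:ℝ) T, |g X t| ≤ supAbs T g := by
    intro g hg X hX t ht
    have hbdd : BddAbove ((fun p : ℝ × ℝ => |g p.1 p.2|) ''
        (Set.Icc (-1:ℝ) 1 ×ˢ Set.Icc (0:ℝ) T)) :=
      (hcomp.image_of_continuousOn (continuous_abs.comp_continuousOn hg)).bddAbove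
    exact le_csSup hbdd ⟨(X, t), ⟨hX, ht⟩, rfl⟩
  have hsupA : 0 ≤ supAbs T a :=
    le_trans (abs_nonneg _) (hval a hacont (-1) (by norm_num) 0 ⟨le_refl _, hT.le⟩)
  have hN₀2 : 2 ≤ N₀ := by
    by_contra hc
    push_neg at hc
    interval_cases N₀ <;>
      simp only [Nat.cast_zero, Nat.cast_one, Real.log_zero, Real.log_one,
        div_zero, zero_div] at h37b <;> nlinarith
  have hNq : 1 ≤ q := by omega
  have hN4' : 4 ≤ N := by omega
  have hNr : (0:ℝ) < (N:ℝ) := by exact_mod_cast (by omega : 0 < N)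
  have hNc : (N:ℝ) = 4 * (q:ℝ) := by rw [hq]; push_cast; ring
  have hh0 : 0 < h := by rw [hh]; positivity
  have hH0 : 0 < H := by rw [hH]; apply div_pos (by linarith) hNr
  have hhH : h ≤ H := by
    rw [hh, hH, div_le_div_iff₀ hNr hNr]
    nlinarith
  have hhN : h * N = 4*τ := by rw [hh]; field_simp
  have hHN : H * N = 4*(1-τ) := by rw [hH]; field_simp
  have hqh : (q:ℝ) * h = τ := by
    have := hhN; rw [hNc] at this; linarith
  have hqH : (q:ℝ) * H = 1 - τ := by
    have := hHN; rw [hNc] at this; linarith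
  have hq4 : N / 4 = q := by omega
  have hsv1 : ∀ i, 1 ≤ i → i ≤ q → hs x i = h := by
    intro i h1 h2
    have hc : ((i - 1 : ℕ) : ℝ) = (i : ℝ) - 1 := by
      rw [Nat.cast_sub h1, Nat.cast_one]
    simp only [hs]
    rw [hx1 i (by omega), hx1 (i-1) (by omega), hc]; ring
  have hsv2 : ∀ i, q < i → i ≤ 3*q → hs x i = H := by
    intro i h1 h2
    have hc : ((i - 1 : ℕ) : ℝ) = (i : ℝ) - 1 := by
      rw [Nat.cast_sub (by omega), Nat.cast_one]
    simp only [hs]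
    rw [hx2 i (by omega) (by omega), hx2 (i-1) (by omega) (by omega), hc]; ring
  have hsv3 : ∀ i, 3*q < i → i ≤ N → hs x i = h := by
    intro i h1 h2
    have hc : ((i - 1 : ℕ) : ℝ) = (i : ℝ) - 1 := by
      rw [Nat.cast_sub (by omega), Nat.cast_one]
    simp only [hs]
    rw [hx3 i (by omega) (by omega), hx3 (i-1) (by omega) (by omega), hc]; ring
  have hs_pos : ∀ i, 1 ≤ i → i ≤ N → 0 < hs x i := by
    intro i h1 h2
    rcases Nat.lt_or_ge q i with hc | hc
    · rcases Nat.lt_or_ge (3*q) i with hc2 | hc2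
      · rw [hsv3 i hc2 h2]; exact hh0
      · rw [hsv2 i hc hc2]; exact hH0
    · rw [hsv1 i h1 hc]; exact hh0
  have hs_le : ∀ i, 1 ≤ i → i ≤ N → hs x i * N ≤ 4 := by
    intro i h1 h2
    rcases Nat.lt_or_ge q i with hc | hc
    · rcases Nat.lt_or_ge (3*q) i with hc2 | hc2
      · rw [hsv3 i hc2 h2]; linarith
      · rw [hsv2 i hc hc2]; linarith
    · rw [hsv1 i h1 hc]; linarith
  have hhat_eq : ∀ i : ℕ, hhat x i = hs x i + hs x (i+1) := by
    intro i
    simp only [hhat, hs, Nat.add_sub_cancel]; ring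
  have xstep : ∀ k, k < N → x k ≤ x (k+1) := by
    intro k hk
    have h1 := hs_pos (k+1) (by omega) (by omega)
    simp only [hs, Nat.add_sub_cancel] at h1
    linarith
  have xmono : ∀ j, j ≤ N → ∀ i, i ≤ j → x i ≤ x j := by
    intro j
    induction j with
    | zero =>
      intro _ i hi
      have h0 : i = 0 := by omega
      rw [h0]
    | succ m ih =>
      intro hm i hi
      rcases Nat.lt_or_ge i (m+1) with hlt | hge
      · exact le_trans (ih (by omega) i (by omega)) (xstep m (by omega))
      · have h0 : i = m+1 := by omega
        rw [h0]
  have hx2q : x (2*q) = 0 := by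
    rw [hx2 (2*q) (by omega) (by omega), hNc]
    push_cast
    linear_combination hqH
  have hdec : ∀ i, 2*q < i → i < N → hs x (i+1) ≤ hs x i := by
    intro i h1 h2
    rcases Nat.lt_or_ge (3*q) (i+1) with hc | hc
    · rw [hsv3 (i+1) hc (by omega)]
      rcases Nat.lt_or_ge (3*q) i with hc2 | hc2
      · rw [hsv3 i hc2 (by omega)]
      · rw [hsv2 i (by omega) hc2]; exact hhH
    · rw [hsv2 (i+1) (by omega) hc, hsv2 i (by omega) (by omega)]
  have xmem : ∀ i, i ≤ N → x i ∈ Set.Icc (-1:ℝ) 1 := by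
    intro i hiN
    rw [Set.mem_Icc]
    rcases Nat.lt_or_ge q i with h1 | h1
    · rcases Nat.lt_or_ge (3*q) i with h2 | h2
      · rw [hx3 i (by omega) (by omega)]
        have c1 : (i:ℝ) ≤ (N:ℝ) := by exact_mod_cast hiN
        have c2 : 3*(q:ℝ) ≤ (i:ℝ) := by exact_mod_cast (by omega : 3*q ≤ i)
        have p1 : 0 ≤ ((N:ℝ) - (i:ℝ)) * h := mul_nonneg (by linarith) hh0.le
        have p2 : ((N:ℝ) - (i:ℝ)) * h ≤ (q:ℝ) * h :=
          mul_le_mul_of_nonneg_right (by linarith [hNc]) hh0.le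
        constructor <;> linarith [hqh, hτ14]
      · rw [hx2 i (by omega) (by omega), hNc]
        have c1 : (i:ℝ) ≤ 3*(q:ℝ) := by exact_mod_cast h2
        have c2 : (q:ℝ) ≤ (i:ℝ) := by exact_mod_cast h1.le
        have p1 : 0 ≤ ((i:ℝ) - (q:ℝ)) * H := mul_nonneg (by linarith) hH0.le
        have p2 : ((i:ℝ) - (q:ℝ)) * H ≤ 2*(q:ℝ) * H :=
          mul_le_mul_of_nonneg_right (by linarith) hH0.le
        constructor <;> linarith [hqH, hτ14, hτ0]
    · rw [hx1 i (by omega)]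
      have c1 : (i:ℝ) ≤ (q:ℝ) := by exact_mod_cast h1
      have p1 : 0 ≤ (i:ℝ) * h := mul_nonneg (Nat.cast_nonneg i) hh0.le
      have p2 : (i:ℝ) * h ≤ (q:ℝ) * h := mul_le_mul_of_nonneg_right c1 hh0.le
      constructor <;> linarith [hqh, hτ14]
  have tnmem : ∀ m, m ≤ M → tn m ∈ Set.Icc (0:ℝ) T := by
    intro m hm
    rw [htn m]
    have c1 : (m:ℝ) ≤ (M:ℝ) := by exact_mod_cast hm
    constructor
    · exact mul_nonneg (Nat.cast_nonneg m) hΔt0.le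
    · have e : (M:ℝ) * Δt = T := by rw [hΔt]; field_simp
      nlinarith [mul_nonneg (by linarith : (0:ℝ) ≤ (M:ℝ) - (m:ℝ)) hΔt0.le]
  have key : ∀ s : ℝ, 0 < s → s * N ≤ 4 →
      (supAbs T d + Δt * supAbs T b) / 2 ≤ κ * Δt / s := by
    intro s hs0 hsle
    have e : supAbs T d / Δt * Δt = supAbs T d := div_mul_cancel₀ _ hΔt0.ne'
    have h1 : supAbs T d + Δt * supAbs T b ≤ (N₀:ℝ) * κ * Δt / 2 := by
      nlinarith [mul_le_mul_of_nonneg_right h37a hΔt0.le]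
    have h2 : (N₀:ℝ) ≤ (N:ℝ) := by exact_mod_cast hNN₀
    have h3 : κ * Δt * (N:ℝ) / 4 ≤ κ * Δt / s := by
      rw [div_le_div_iff₀ (by norm_num) hs0]
      nlinarith [mul_pos hκ hΔt0, mul_le_mul_of_nonneg_left hsle (mul_pos hκ hΔt0).le]
    nlinarith [mul_le_mul_of_nonneg_right h2 (mul_pos hκ hΔt0).le]
  -- main part
  intro n hn1 hnM i hi1 hiN1
  have hiN : i ≤ N := by omega
  have hip : i + 1 ≤ N := by omega
  have hs1p : 0 < hs x i := hs_pos i hi1 hiN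
  have hs2p : 0 < hs x (i+1) := hs_pos (i+1) (by omega) hip
  have hs1l : hs x i * N ≤ 4 := hs_le i hi1 hiN
  have hs2l : hs x (i+1) * N ≤ 4 := hs_le (i+1) (by omega) hip
  have hhE : hhat x i = hs x i + hs x (i+1) := hhat_eq i
  have hhp : 0 < hhat x i := by rw [hhE]; linarith
  have hxi := xmem i hiN
  have hxip := xmem (i+1) hip
  have hxim := xmem (i-1) (by omega)
  have htm := tnmem n hnM
  have hbi : β ≤ b (x i) (tn n) := hb _ hxi _ htm
  have hdi : γ ≤ d (x i) (tn n) := hd _ hxi _ htm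
  have heps1 : 0 < 2*ε*Δt/(hhat x i * hs x i) :=
    div_pos (by positivity) (mul_pos hhp hs1p)
  have heps2 : 0 < 2*ε*Δt/(hhat x i * hs x (i+1)) :=
    div_pos (by positivity) (mul_pos hhp hs2p)
  refine ⟨?_, ?_, ?_⟩
  · -- central scheme
    intro hI
    obtain ⟨hIl, hIr⟩ := abs_lt.mp hI
    have hMpos : 0 < rCenM ε Δt a x tn i n := by
      have e1 : rCenM ε Δt a x tn i n
          = Δt * (2*ε - a (x i) (tn n) * hs x i) / (hhat x i * hs x i) := by
        unfold rCenM
        exact cen_eM ε Δt (hhat x i) (hs x i) (a (x i) (tn n)) hhp.ne' hs1p.ne'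
      rw [e1]
      exact div_pos (mul_pos hΔt0 (by linarith)) (mul_pos hhp hs1p)
    have hPpos : 0 < rCenP ε Δt a x tn i n := by
      have e2 : rCenP ε Δt a x tn i n
          = Δt * (2*ε + a (x i) (tn n) * hs x (i+1)) / (hhat x i * hs x (i+1)) := by
        unfold rCenP
        exact cen_eP ε Δt (hhat x i) (hs x (i+1)) (a (x i) (tn n)) hhp.ne' hs2p.ne'
      have hnum : 0 < 2*ε + a (x i) (tn n) * hs x (i+1) := by
        rcases le_or_gt 0 (a (x i) (tn n)) with hA | hA
        · linarith [mul_nonneg hA hs2p.le]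
        · have hxpos : 0 < x i := by
            by_contra hxc
            push_neg at hxc
            have h1 := haform (x i) hxi (tn n) htm
            have h2 : x i ^ p ≤ 0 := hpodd.pow_nonpos hxc
            have h3 : α₀ ≤ a₀ (x i) (tn n) := ha₀ _ hxi _ htm
            linarith [mul_nonneg (le_trans hα₀.le h3) (neg_nonneg.mpr h2)]
          have hgt : 2*q < i := by
            by_contra hc
            push_neg at hc
            have := xmono (2*q) (by omega) i hc
            rw [hx2q] at this
            linarith
          have hdd : hs x (i+1) ≤ hs x i := hdec i hgt (by omega)
          linarith [mul_le_mul_of_nonpos_left hdd hA.le, hIl, hε0]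
      rw [e2]
      exact div_pos (mul_pos hΔt0 hnum) (mul_pos hhp hs2p)
    have hid : rCenP ε Δt a x tn i n + rCenM ε Δt a x tn i n
        + b (x i) (tn n) * Δt + d (x i) (tn n) = -(rCen0 ε Δt b d x tn i n) := by
      unfold rCenP rCenM rCen0
      exact cen_id ε Δt (hhat x i) (hs x i) (hs x (i+1)) (a (x i) (tn n))
        (b (x i) (tn n)) (d (x i) (tn n)) hhp.ne' hs1p.ne' hs2p.ne'
    have hbd : 0 < b (x i) (tn n) * Δt := mul_pos (lt_of_lt_of_le hβ hbi) hΔt0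
    have h0neg : rCen0 ε Δt b d x tn i n < 0 := by linarith
    refine ⟨hMpos, hPpos, ?_⟩
    rw [abs_of_pos hPpos, abs_of_pos hMpos, abs_of_neg h0neg]
    linarith
  · -- midpoint upwind +
    intro hI hi2
    have hAP : κ ≤ avgP a x tn i n := hκP i n hi1 hi2 hn1 hnM hI
    have hbip : β ≤ b (x (i+1)) (tn n) := hb _ hxip _ htm
    have hdip : γ ≤ d (x (i+1)) (tn n) := hd _ hxip _ htm
    have hDP1 : γ ≤ avgP d x tn i n := by unfold avgP; linarith
    have hDP2 : avgP d x tn i n ≤ supAbs T d := by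
      have t1 := hval d hdcont _ hxi _ htm
      have t2 := hval d hdcont _ hxip _ htm
      unfold avgP
      linarith [le_abs_self (d (x i) (tn n)), le_abs_self (d (x (i+1)) (tn n))]
    have hBP1 : β ≤ avgP b x tn i n := by unfold avgP; linarith
    have hBP2 : avgP b x tn i n ≤ supAbs T b := by
      have t1 := hval b hbcont _ hxi _ htm
      have t2 := hval b hbcont _ hxip _ htm
      unfold avgP
      linarith [le_abs_self (b (x i) (tn n)), le_abs_self (b (x (i+1)) (tn n))]
    have hchain := key (hs x (i+1)) hs2p hs2l
    have h4 : κ * Δt / hs x (i+1) ≤ avgP a x tn i n * Δt / hs x (i+1) :=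
      (div_le_div_iff_of_pos_right hs2p).mpr (mul_le_mul_of_nonneg_right hAP hΔt0.le)
    have hBmul : Δt * avgP b x tn i n ≤ Δt * supAbs T b :=
      mul_le_mul_of_nonneg_left hBP2 hΔt0.le
    have hPP : 0 < rMuPP ε Δt a b d x tn i n := by
      unfold rMuPP; linarith
    have hPM : 0 < rMuPM ε Δt x i := by
      unfold rMuPM; exact heps1
    have hid : rMuPP ε Δt a b d x tn i n + rMuPM ε Δt x i
        + avgP d x tn i n + Δt * avgP b x tn i n = -(rMuP0 ε Δt a b d x tn i n) := by
      unfold rMuPP rMuPM rMuP0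
      exact muP_id ε Δt (hhat x i) (hs x i) (hs x (i+1)) (avgP a x tn i n)
        (avgP b x tn i n) (avgP d x tn i n) hhp.ne' hs1p.ne' hs2p.ne'
    have hbd : 0 < Δt * avgP b x tn i n := mul_pos hΔt0 (lt_of_lt_of_le hβ hBP1)
    have h0neg : rMuP0 ε Δt a b d x tn i n < 0 := by linarith
    refine ⟨hPP, hPM, ?_⟩
    rw [abs_of_pos hPP, abs_of_pos hPM, abs_of_neg h0neg]
    linarith
  · -- midpoint upwind -
    intro hI hi2
    have hAM : κ ≤ -avgM a x tn i n := hκM i n hi2 hiN1 hn1 hnM hI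
    have hbim : β ≤ b (x (i-1)) (tn n) := hb _ hxim _ htm
    have hdim : γ ≤ d (x (i-1)) (tn n) := hd _ hxim _ htm
    have hDM1 : γ ≤ avgM d x tn i n := by unfold avgM; linarith
    have hDM2 : avgM d x tn i n ≤ supAbs T d := by
      have t1 := hval d hdcont _ hxi _ htm
      have t2 := hval d hdcont _ hxim _ htm
      unfold avgM
      linarith [le_abs_self (d (x i) (tn n)), le_abs_self (d (x (i-1)) (tn n))]
    have hBM1 : β ≤ avgM b x tn i n := by unfold avgM; linarith
    have hBM2 : avgM b x tn i n ≤ supAbs T b := by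
      have t1 := hval b hbcont _ hxi _ htm
      have t2 := hval b hbcont _ hxim _ htm
      unfold avgM
      linarith [le_abs_self (b (x i) (tn n)), le_abs_self (b (x (i-1)) (tn n))]
    have hchain := key (hs x i) hs1p hs1l
    have h4 : κ * Δt / hs x i ≤ -avgM a x tn i n * Δt / hs x i :=
      (div_le_div_iff_of_pos_right hs1p).mpr (mul_le_mul_of_nonneg_right hAM hΔt0.le)
    have h4' : -avgM a x tn i n * Δt / hs x i = -(avgM a x tn i n * Δt / hs x i) := by
      ring
    rw [h4'] at h4
    have hBmul : avgM b x tn i n * Δt ≤ supAbs T b * Δt :=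
      mul_le_mul_of_nonneg_right hBM2 hΔt0.le
    have hMM : 0 < rMuMM ε Δt a b d x tn i n := by
      unfold rMuMM; linarith
    have hMP : 0 < rMuMP ε Δt x i := by
      unfold rMuMP; exact heps2
    have hid : rMuMP ε Δt x i + rMuMM ε Δt a b d x tn i n
        + avgM d x tn i n + avgM b x tn i n * Δt = -(rMuM0 ε Δt a b d x tn i n) := by
      unfold rMuMP rMuMM rMuM0
      exact muM_id ε Δt (hhat x i) (hs x i) (hs x (i+1)) (avgM a x tn i n)
        (avgM b x tn i n) (avgM d x tn i n) hhp.ne' hs1p.ne' hs2p.ne'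
    have hbd : 0 < avgM b x tn i n * Δt := mul_pos (lt_of_lt_of_le hβ hBM1) hΔt0
    have h0neg : rMuM0 ε Δt a b d x tn i n < 0 := by linarith
    refine ⟨hMM, hMP, ?_⟩
    rw [abs_of_pos hMP, abs_of_pos hMM, abs_of_neg h0neg]
    linarith

end
end

section
/- Barrier functions dominate the boundary-layer exponentials (Lemma 4.3(i)): consider the Shishkin mesh in the layer-resolving case τ = τ₀εL < 1/4 with fine step h = 4τ/N, and define B̂_i = (1+αh/ε)^{−N/4} for N/2 ≤ i ≤ 3N/4, B̂_i = (1+αh/ε)^{−(N−i)} for 3N/4 ≤ i ≤ N, B̄_i = (1+αh/ε)^{−i} for 0 ≤ i ≤ N/4 and B̄_i = (1+αh/ε)^{−N/4} for N/4 ≤ i ≤ N/2. Then for all admissible i: exp(−α(1−x_i)/ε) ≤ B̂_i (N/2 ≤ i ≤ N) and exp(−α(1+x_i)/ε) ≤ B̄_i (0 ≤ i ≤ N/2). -/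
noncomputable section

/-- discrete barrier function `B̂_i` (right layer). -/
def BhatF (α h ε : ℝ) (N i : ℕ) : ℝ :=
  if i ≤ 3 * (N / 4) then (1 + α * h / ε) ^ (-((N / 4 : ℕ) : ℤ))
  else (1 + α * h / ε) ^ (-((N - i : ℕ) : ℤ))

/-- discrete barrier function `B̄_i` (left layer). -/
def BbarF (α h ε : ℝ) (N i : ℕ) : ℝ :=
  if i ≤ N / 4 then (1 + α * h / ε) ^ (-(i : ℤ))
  else (1 + α * h / ε) ^ (-((N / 4 : ℕ) : ℤ))

lemma key_aux (t : ℝ) (ht : 0 ≤ t) (k : ℕ) :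
    Real.exp (-(t * k)) ≤ (1 + t) ^ (-(k : ℤ)) := by
  rw [zpow_neg, zpow_natCast, Real.exp_neg]
  have h1 : (0:ℝ) < (1 + t) ^ k := pow_pos (by linarith) k
  have h2 : (1 + t) ^ k ≤ Real.exp (t * k) := by
    calc (1 + t) ^ k = (t + 1) ^ k := by ring
      _ ≤ Real.exp t ^ k :=
          pow_le_pow_left₀ (by linarith) (Real.add_one_le_exp t) k
      _ = Real.exp (t * k) := by rw [mul_comm t (k:ℝ), Real.exp_nat_mul]
  exact inv_anti₀ h1 h2

/-- Lemma 4.3(i): the discrete barrier functions dominate the boundary-layer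
exponentials on the Shishkin mesh (layer-resolving case `τ = τ₀εL < 1/4`). -/
theorem stmt_11
    (ε α τ₀ L τ h H : ℝ) (N : ℕ) (x : ℕ → ℝ)
    (hε : 0 < ε) (hα : 0 < α) (hτ₀ : 1 / α ≤ τ₀)
    (hL : 0 < L) (hN : 0 < N) (hN4 : 4 ∣ N)
    (hτ : τ = τ₀ * ε * L) (hτlt : τ < 1 / 4)
    (hh : h = 4 * τ / N) (hH : H = 4 * (1 - τ) / N)
    (hx1 : ∀ i : ℕ, i ≤ N / 4 → x i = -1 + i * h)
    (hx2 : ∀ i : ℕ, N / 4 ≤ i → i ≤ 3 * (N / 4) →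
      x i = -1 + τ + ((i : ℝ) - (N : ℝ) / 4) * H)
    (hx3 : ∀ i : ℕ, 3 * (N / 4) ≤ i → i ≤ N → x i = 1 - ((N : ℝ) - (i : ℝ)) * h) :
    (∀ i : ℕ, N / 2 ≤ i → i ≤ N →
      Real.exp (-(α * (1 - x i)) / ε) ≤ BhatF α h ε N i) ∧
    (∀ i : ℕ, i ≤ N / 2 →
      Real.exp (-(α * (1 + x i)) / ε) ≤ BbarF α h ε N i) := by
  obtain ⟨M, rfl⟩ := hN4
  have hM4 : 4 * M / 4 = M := by omega
  have hMpos : 0 < M := by omega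
  have hMR : (0:ℝ) < (M:ℝ) := by exact_mod_cast hMpos
  have hτpos : 0 < τ := by
    have hτ₀pos : 0 < τ₀ := lt_of_lt_of_le (one_div_pos.mpr hα) hτ₀
    rw [hτ]; positivity
  have hNR : ((4 * M : ℕ) : ℝ) = 4 * (M:ℝ) := by push_cast; ring
  have hhM : (M : ℝ) * h = τ := by
    rw [hh, hNR]; field_simp
  have hhpos : 0 < h := by nlinarith
  have hHnn : 0 ≤ H := by
    rw [hH, hNR]
    have h1 : (0:ℝ) ≤ 4 * (1 - τ) := by linarith
    positivity
  have h2MH : (2 * (M:ℝ)) * H = 2 * (1 - τ) := by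
    rw [hH, hNR]; field_simp
  set t := α * h / ε with htdef
  have ht : 0 ≤ t := by positivity
  have htε : α * h = t * ε := by rw [htdef]; field_simp
  constructor
  · intro i h2i hiN
    have h2i' : 2 * M ≤ i := by omega
    unfold BhatF
    rw [hM4]
    by_cases hcase : i ≤ 3 * M
    · rw [if_pos (by omega)]
      have hxeq := hx2 i (by omega) (by omega)
      rw [hNR] at hxeq
      have hiR : ((M:ℝ)) ≤ (i:ℝ) ∧ (i:ℝ) ≤ 3 * M := by
        constructor <;> exact_mod_cast (by omega : _)
      have hxle : x i ≤ 1 - τ := by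
        have key1 : ((i:ℝ) - 4 * M / 4) * H ≤ (2 * (M:ℝ)) * H :=
          mul_le_mul_of_nonneg_right (by linarith [hiR.2]) hHnn
        rw [hxeq]; linarith
      have hexp : Real.exp (-(α * (1 - x i)) / ε) ≤ Real.exp (-(t * M)) := by
        apply Real.exp_le_exp.mpr
        rw [div_le_iff₀ hε]
        nlinarith [mul_le_mul_of_nonneg_left (by linarith : τ ≤ 1 - x i) hα.le]
      exact hexp.trans (key_aux t ht M)
    · rw [if_neg (by omega)]
      have hxeq := hx3 i (by omega) (by omega)
      have heq : -(α * (1 - x i)) / ε = -(t * ((4 * M - i : ℕ) : ℝ)) := by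
        rw [hxeq, hNR, htdef]
        have : ((4 * M - i : ℕ) : ℝ) = 4 * (M:ℝ) - i := by
          push_cast [Nat.cast_sub hiN]; ring
        rw [this]
        field_simp; ring_nf
      rw [heq]
      exact key_aux t ht (4 * M - i)
  · intro i hi2
    have hi2' : i ≤ 2 * M := by omega
    unfold BbarF
    rw [hM4]
    by_cases hcase : i ≤ M
    · rw [if_pos hcase]
      have hxeq := hx1 i (by omega)
      have heq : -(α * (1 + x i)) / ε = -(t * i) := by
        rw [hxeq, htdef]; field_simp; ring_nf
      rw [heq]
      exact key_aux t ht i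
    · rw [if_neg hcase]
      have hxeq := hx2 i (by omega) (by omega)
      rw [hNR] at hxeq
      have hiR : ((M:ℝ)) ≤ (i:ℝ) := by exact_mod_cast (by omega : M ≤ i)
      have hxge : -1 + τ ≤ x i := by
        have key1 : 0 ≤ ((i:ℝ) - 4 * M / 4) * H :=
          mul_nonneg (by linarith) hHnn
        rw [hxeq]; linarith
      have hexp : Real.exp (-(α * (1 + x i)) / ε) ≤ Real.exp (-(t * M)) := by
        apply Real.exp_le_exp.mpr
        rw [div_le_iff₀ hε]
        nlinarith [mul_le_mul_of_nonneg_left (by linarith : τ ≤ 1 + x i) hα.le]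
      exact hexp.trans (key_aux t ht M)

end
end

section
/- Smallness of the barrier function in the outer region (Lemma 4.3(ii)): for every μ > 0 there exists a constant C > 0 such that for all integers N ≥ 2 and all real L > 0 satisfying e^{−L} ≤ L/N and L ≤ ln N, one has (1 + 4μL/N)^{−N/4} ≤ C N^{−μ} L^{μ}. In particular, for the Shishkin mesh with τ = τ₀εL < 1/4, h = 4τ/N and μ = ατ₀, the barrier values B̂_i = (1+αh/ε)^{−N/4} (N/2 ≤ i ≤ 3N/4) and B̄_i = (1+αh/ε)^{−N/4} (N/4 ≤ i ≤ N/2) satisfy B̂_i ≤ C N^{−ατ₀} L^{ατ₀} and B̄_i ≤ C N^{−ατ₀} L^{ατ₀}, while trivially B̂_i ≤ 1 and B̄_i ≤ 1 for the remaining indices. -/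
noncomputable section

lemma log_sq_le_aux (N : ℕ) (hN : 2 ≤ N) : (Real.log N) ^ 2 ≤ 12 * N := by
  have hN0 : (0:ℝ) < N := by positivity
  have hN2 : (2:ℝ) ≤ N := by exact_mod_cast hN
  have hsN : Real.sqrt 2 ≤ Real.sqrt N := Real.sqrt_le_sqrt hN2
  have hs2 : Real.sqrt 2 ^ 2 = 2 := Real.sq_sqrt (by norm_num)
  have hsNsq : Real.sqrt N ^ 2 = N := Real.sq_sqrt hN0.le
  set s := Real.sqrt (Real.sqrt N) with hs
  have hssq : s ^ 2 = Real.sqrt N := Real.sq_sqrt (Real.sqrt_nonneg _)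
  have hlogN : Real.log N = 4 * Real.log s := by
    rw [hs, Real.log_sqrt (Real.sqrt_nonneg _), Real.log_sqrt hN0.le]; ring
  have hspos : 0 < s := by
    rw [hs, Real.sqrt_pos, Real.sqrt_pos]; exact hN0
  have hls : Real.log s ≤ s := by linarith [Real.log_le_sub_one_of_pos hspos]
  have h2 : (0:ℝ) ≤ Real.sqrt 2 := Real.sqrt_nonneg _
  have hlognn : 0 ≤ Real.log (N:ℝ) := Real.log_nonneg (by linarith)
  have hls4 : Real.log (N:ℝ) ≤ 4 * s := by rw [hlogN]; linarith
  have h43 : (4:ℝ) ≤ 3 * Real.sqrt 2 := by nlinarith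
  have h16 : 16 * Real.sqrt (N:ℝ) ≤ 12 * N := by
    nlinarith [mul_nonneg (Real.sqrt_nonneg (N:ℝ))
      (show (0:ℝ) ≤ 3 * Real.sqrt (N:ℝ) - 4 by linarith)]
  have hsq : Real.log (N:ℝ) ^ 2 ≤ (4 * s) ^ 2 := by nlinarith
  have : (4 * s) ^ 2 = 16 * Real.sqrt (N:ℝ) := by rw [mul_pow, hssq]; ring
  linarith

lemma key_ineq (μ : ℝ) (hμ : 0 < μ) (N : ℕ) (hN : 2 ≤ N) (L : ℝ) (hL : 0 < L)
    (h1 : Real.exp (-L) ≤ L / N) (h2 : L ≤ Real.log N) :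
    (1 + 4 * μ * L / N) ^ (-((N : ℝ) / 4)) ≤
      Real.exp (48 * μ ^ 2) * (N : ℝ) ^ (-μ) * L ^ μ := by
  have hN0 : (0:ℝ) < N := by positivity
  set x := 4 * μ * L / N with hxdef
  have hx : 0 < x := by positivity
  have hb : (0:ℝ) < 1 + x := by linarith
  -- log (1+x) ≥ x - x²
  have hlog : x - x ^ 2 ≤ Real.log (1 + x) := by
    have h := Real.log_le_sub_one_of_pos (show (0:ℝ) < (1+x)⁻¹ by positivity)
    rw [Real.log_inv] at h
    have hinv : (1 + x) * (1 + x)⁻¹ = 1 := mul_inv_cancel₀ (ne_of_gt hb)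
    nlinarith [mul_pos hx (mul_pos hx hx)]
  have hN2 : (2:ℝ) ≤ N := by exact_mod_cast hN
  have hL2 : L ^ 2 ≤ 12 * N := by
    have := log_sq_le_aux N hN
    nlinarith [Real.log_nonneg (show (1:ℝ) ≤ (N:ℝ) by linarith)]
  rw [Real.rpow_def_of_pos hb]
  have hdiv : 4 * μ ^ 2 * L ^ 2 / N ≤ 48 * μ ^ 2 := by
    rw [div_le_iff₀ hN0]; nlinarith [sq_nonneg μ]
  have step1 : Real.exp (Real.log (1 + x) * (-((N:ℝ)/4))) ≤ Real.exp (48 * μ^2 - μ * L) := by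
    apply Real.exp_le_exp.mpr
    have h4 : (N:ℝ)/4 * (x - x^2) ≤ (N:ℝ)/4 * Real.log (1 + x) :=
      mul_le_mul_of_nonneg_left hlog (by positivity)
    have hxval : (N:ℝ)/4 * x = μ * L := by
      rw [hxdef]; field_simp
    have hx2 : (N:ℝ)/4 * x^2 = 4 * μ^2 * L^2 / N := by
      rw [hxdef]; field_simp
    have hexp : (N:ℝ)/4 * (x - x^2) = (N:ℝ)/4 * x - (N:ℝ)/4 * x^2 := by ring
    nlinarith
  have e1 : (Real.exp (-L)) ^ μ = Real.exp (-(μ * L)) := by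
    rw [Real.rpow_def_of_pos (Real.exp_pos _), Real.log_exp]; ring_nf
  have e2 : (Real.exp (-L)) ^ μ ≤ ((L / N : ℝ)) ^ μ :=
    Real.rpow_le_rpow (Real.exp_pos _).le h1 hμ.le
  have e3 : ((L / N : ℝ)) ^ μ = L ^ μ * (N : ℝ) ^ (-μ) := by
    rw [Real.div_rpow hL.le hN0.le, Real.rpow_neg hN0.le, div_eq_mul_inv]
  calc Real.exp (Real.log (1 + x) * (-((N:ℝ)/4)))
      ≤ Real.exp (48 * μ^2 - μ * L) := step1
    _ = Real.exp (48 * μ^2) * Real.exp (-(μ * L)) := by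
        rw [← Real.exp_add]; ring_nf
    _ ≤ Real.exp (48 * μ^2) * (L ^ μ * (N : ℝ) ^ (-μ)) := by
        apply mul_le_mul_of_nonneg_left _ (Real.exp_pos _).le
        rw [← e1, ← e3]; exact e2
    _ = Real.exp (48 * μ ^ 2) * (N : ℝ) ^ (-μ) * L ^ μ := by ring

/-- Lemma 4.3(ii): smallness of the barrier functions in the outer region:
`(1 + 4μL/N)^{-N/4} ≤ C N^{-μ} L^{μ}` whenever `e^{-L} ≤ L/N` and `L ≤ ln N`;
in particular `B̂_i, B̄_i ≤ C N^{-ατ₀} L^{ατ₀}` on the middle indices of the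
Shishkin mesh, while trivially `B̂_i, B̄_i ≤ 1` everywhere. -/
theorem stmt_12 :
    ∀ μ : ℝ, 0 < μ → ∃ C : ℝ, 0 < C ∧
      ∀ N : ℕ, 2 ≤ N → ∀ L : ℝ, 0 < L → Real.exp (-L) ≤ L / N → L ≤ Real.log N →
        ((1 + 4 * μ * L / N) ^ (-((N : ℝ) / 4)) ≤ C * (N : ℝ) ^ (-μ) * L ^ μ) ∧
        (∀ ε α τ₀ τ h : ℝ, 0 < ε → 0 < α → μ = α * τ₀ → 1 / α ≤ τ₀ →
          τ = τ₀ * ε * L → τ < 1 / 4 → h = 4 * τ / N → 4 ∣ N →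
          (∀ i : ℕ, N / 2 ≤ i → i ≤ 3 * (N / 4) →
            BhatF α h ε N i ≤ C * (N : ℝ) ^ (-μ) * L ^ μ) ∧
          (∀ i : ℕ, N / 4 ≤ i → i ≤ N / 2 →
            BbarF α h ε N i ≤ C * (N : ℝ) ^ (-μ) * L ^ μ)) ∧
        (∀ ε α h : ℝ, 0 < ε → 0 < α → 0 ≤ h →
          (∀ i : ℕ, BhatF α h ε N i ≤ 1) ∧ (∀ i : ℕ, BbarF α h ε N i ≤ 1)) := by
  intro μ hμ
  refine ⟨Real.exp (48 * μ ^ 2), Real.exp_pos _, fun N hN L hL h1 h2 => ?_⟩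
  have hkey := key_ineq μ hμ N hN L hL h1 h2
  have hN0 : (0:ℝ) < N := by positivity
  refine ⟨hkey, ?_, ?_⟩
  · intro ε α τ₀ τ h hε hα hμeq hτ₀ hτ hτlt hh h4N
    have hx : α * h / ε = 4 * μ * L / N := by
      rw [hh, hτ, hμeq]; field_simp
    have hN4 : ((N / 4 : ℕ) : ℝ) = (N : ℝ) / 4 := by
      rw [Nat.cast_div h4N (by norm_num)]; norm_num
    have hzr : (1 + α * h / ε) ^ (-((N / 4 : ℕ) : ℤ)) =
        (1 + 4 * μ * L / N) ^ (-((N : ℝ) / 4)) := by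
      rw [hx, ← Real.rpow_intCast]
      congr 1
      rw [Int.cast_neg, Int.cast_natCast, hN4]
    constructor
    · intro i hi1 hi2
      rw [BhatF, if_pos hi2, hzr]; exact hkey
    · intro i hi1 hi2
      rw [BbarF]
      split
      · rename_i h'
        have : i = N / 4 := le_antisymm h' hi1
        rw [this, show (-(((N/4 : ℕ)) : ℤ)) = (-((N / 4 : ℕ) : ℤ)) from rfl, hzr]
        exact hkey
      · rw [hzr]; exact hkey
  · intro ε α h hε hα hh
    have hb1 : (1:ℝ) ≤ 1 + α * h / ε := by
      have : 0 ≤ α * h / ε := by positivity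
      linarith
    constructor <;> intro i
    · rw [BhatF]
      split <;> exact zpow_le_one_of_nonpos₀ hb1 (neg_nonpos.mpr (Int.natCast_nonneg _))
    · rw [BbarF]
      split <;> exact zpow_le_one_of_nonpos₀ hb1 (neg_nonpos.mpr (Int.natCast_nonneg _))

end
end
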